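/- arXiv:1810.12279 — 2 statements merged into one kernel-verified Lean document; each statement's English description precedes it below -/
import Mathlib

section
/- Let R be a commutative ring, let Λ be a finite free R-module with a quadratic form Q, and let v ∈ Λ. Suppose that Λ = W ⊕ R·v is an orthogonal direct sum decomposition where W = v^⊥, and suppose that 2 and the value Q(v) are invertible in R. Then the even Clifford algebra C⁺(W), viewed inside C⁺(Λ) via the natural inclusion W ⊆ Λ, equals the set {z ∈ C⁺(Λ) : v·z = z·v}, i.e., it is the centralizer of v in C⁺(Λ). -/
open CliffordAlgebra

section Aux

variable {R : Type*} [CommRing R] {Λ : Type*} [AddCommGroup Λ] [Module R Λ]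
  (Q : QuadraticForm R Λ) (v : Λ) (W : Submodule R Λ)

/-- The natural isometry from `W` to `Λ`. -/
private def incl : (Q.comp W.subtype) →qᵢ Q :=
  { toLinearMap := W.subtype, map_app' := fun _ => rfl }

private lemma incl_ι (w : W) :
    CliffordAlgebra.map (incl Q W) (ι (Q.comp W.subtype) w) = ι Q (w : Λ) :=
  CliffordAlgebra.map_apply_ι _ _

/-- `involute` commutes with the natural map. -/
private lemma map_involute' (y : CliffordAlgebra (Q.comp W.subtype)) :
    involute (CliffordAlgebra.map (incl Q W) y) =
      CliffordAlgebra.map (incl Q W) (involute y) := by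
  induction y using CliffordAlgebra.induction with
  | algebraMap r => simp
  | ι w => simp [incl_ι]
  | mul a b ha hb => simp [ha, hb]
  | add a b ha hb => simp [ha, hb]

/-- The natural map preserves the even/odd grading. -/
private lemma map_evenOdd_le (i : ZMod 2) :
    (evenOdd (Q.comp W.subtype) i).map
        (CliffordAlgebra.map (incl Q W)).toLinearMap ≤ evenOdd Q i := by
  have hr : (LinearMap.range (ι (Q.comp W.subtype))).map
      (CliffordAlgebra.map (incl Q W)).toLinearMap ≤ LinearMap.range (ι Q) := by
    rintro _ ⟨y, ⟨w, rfl⟩, rfl⟩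
    exact ⟨(w : Λ), (incl_ι Q W w).symm⟩
  rw [evenOdd, Submodule.map_iSup]
  refine iSup_le fun j => ?_
  rw [Submodule.map_pow]
  exact le_trans (pow_le_pow_left' hr (j : ℕ))
    (le_iSup (fun j : {n : ℕ // (n : ZMod 2) = i} =>
      LinearMap.range (ι Q) ^ (j : ℕ)) j)

private lemma map_evenOdd_mem (i : ZMod 2) {y : CliffordAlgebra (Q.comp W.subtype)}
    (hy : y ∈ evenOdd (Q.comp W.subtype) i) :
    CliffordAlgebra.map (incl Q W) y ∈ evenOdd Q i :=
  map_evenOdd_le Q W i (Submodule.mem_map_of_mem hy)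

variable (hW : ∀ w : Λ, w ∈ W ↔ QuadraticMap.polar Q v w = 0)

include hW in
/-- Moving `ι Q v` past the image of `C(W)` applies `involute`. -/
private lemma comm_lemma (y : CliffordAlgebra (Q.comp W.subtype)) :
    ι Q v * CliffordAlgebra.map (incl Q W) y =
      CliffordAlgebra.map (incl Q W) (involute y) * ι Q v := by
  induction y using CliffordAlgebra.induction with
  | algebraMap r => simp [Algebra.commutes]
  | ι w =>
      rw [incl_ι, involute_ι, map_neg, incl_ι, neg_mul, eq_neg_iff_add_eq_zero,
        CliffordAlgebra.ι_mul_ι_add_swap, (hW (w : Λ)).mp w.2, map_zero]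
  | mul a b ha hb =>
      rw [map_mul, ← mul_assoc, ha, mul_assoc, hb, ← mul_assoc, map_mul, map_mul]
  | add a b ha hb => simp only [map_add, mul_add, add_mul, ha, hb]

variable (hcompl : IsCompl W (Submodule.span R {v}))

include hW hcompl in
/-- Every element of `C(Λ)` is of the form `F a + F b * ι Q v`. -/
private lemma span_lemma (x : CliffordAlgebra Q) :
    ∃ a b : CliffordAlgebra (Q.comp W.subtype),
      x = CliffordAlgebra.map (incl Q W) a +
        CliffordAlgebra.map (incl Q W) b * ι Q v := by
  induction x using CliffordAlgebra.induction with
  | algebraMap r => exact ⟨algebraMap _ _ r, 0, by simp⟩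
  | ι m =>
      have hm : m ∈ W ⊔ Submodule.span R {v} := by rw [hcompl.sup_eq_top]; trivial
      obtain ⟨w, hw, s, hs, rfl⟩ := Submodule.mem_sup.mp hm
      obtain ⟨c, rfl⟩ := Submodule.mem_span_singleton.mp hs
      refine ⟨ι _ ⟨w, hw⟩, algebraMap _ _ c, ?_⟩
      rw [map_add, incl_ι, map_smul, AlgHom.commutes]
      simp [Algebra.smul_def]
  | mul x y hx hy =>
      obtain ⟨a, b, rfl⟩ := hx
      obtain ⟨c, d, rfl⟩ := hy
      refine ⟨a * c + b * involute d * algebraMap _ _ (Q v), a * d + b * involute c, ?_⟩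
      have h1 := comm_lemma Q v W hW c
      have h2 := comm_lemma Q v W hW d
      have h1' : ∀ x, ι Q v * (CliffordAlgebra.map (incl Q W) c * x) =
          CliffordAlgebra.map (incl Q W) (involute c) * (ι Q v * x) := fun x => by
        rw [← mul_assoc, h1, mul_assoc]
      have h2' : ∀ x, ι Q v * (CliffordAlgebra.map (incl Q W) d * x) =
          CliffordAlgebra.map (incl Q W) (involute d) * (ι Q v * x) := fun x => by
        rw [← mul_assoc, h2, mul_assoc]
      have hsq : ι Q v * ι Q v = algebraMap R _ (Q v) := CliffordAlgebra.ι_sq_scalar Q v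
      simp only [map_add, map_mul, AlgHom.commutes, mul_add, add_mul, mul_assoc, h1, h2,
        h1', h2', hsq]
      abel
  | add x y hx hy =>
      obtain ⟨a, b, rfl⟩ := hx
      obtain ⟨c, d, rfl⟩ := hy
      exact ⟨a + c, b + d, by simp only [map_add, add_mul]; abel⟩

end Aux

/-- Let `(Λ, Q)` be a finite free quadratic module over a commutative ring `R` with an
orthogonal decomposition `Λ = W ⊕ R·v` where `W = v^⊥`, and suppose `2` and `Q v` are
invertible in `R`.  Then the even Clifford algebra `C⁺(W)`, viewed inside `C⁺(Λ)` via
the natural inclusion `W ⊆ Λ`, is exactly the centralizer of `v` in `C⁺(Λ)`. -/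
theorem even_clifford_of_perp_eq_centralizer
    (R : Type*) [CommRing R] (Λ : Type*) [AddCommGroup Λ] [Module R Λ]
    [Module.Free R Λ] [Module.Finite R Λ]
    (Q : QuadraticForm R Λ) (v : Λ)
    (h2 : IsUnit (2 : R)) (hQv : IsUnit (Q v))
    (W : Submodule R Λ)
    (hW : ∀ w : Λ, w ∈ W ↔ QuadraticMap.polar Q v w = 0)
    (hcompl : IsCompl W (Submodule.span R {v})) :
    Subalgebra.map
        (CliffordAlgebra.map
          ({ toLinearMap := W.subtype, map_app' := fun _ => rfl } :
            (Q.comp W.subtype) →qᵢ Q))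
        (even (Q.comp W.subtype)) =
      even Q ⊓ Subalgebra.centralizer R {ι Q v} := by
  show Subalgebra.map (CliffordAlgebra.map (incl Q W)) (even (Q.comp W.subtype)) = _
  set F := CliffordAlgebra.map (incl Q W) with hF
  apply le_antisymm
  · rintro z hz
    obtain ⟨y, hy, rfl⟩ := Subalgebra.mem_map.mp hz
    have hy' : y ∈ evenOdd (Q.comp W.subtype) 0 := hy
    refine ⟨map_evenOdd_mem Q W 0 hy', (Subalgebra.mem_centralizer_iff R).mpr ?_⟩
    rintro g hg
    rw [Set.mem_singleton_iff] at hg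
    subst hg
    rw [comm_lemma Q v W hW y, involute_eq_of_mem_even hy']
  · rintro z ⟨hze, hzc⟩
    have hze' : z ∈ evenOdd Q 0 := hze
    have hc : ι Q v * z = z * ι Q v :=
      (Subalgebra.mem_centralizer_iff R).mp hzc _ (Set.mem_singleton _)
    obtain ⟨a, b, hz⟩ := span_lemma Q v W hW hcompl z
    have halg : IsUnit (algebraMap R (CliffordAlgebra Q) (Q v)) :=
      hQv.map (algebraMap R _)
    have hsq : ι Q v * ι Q v = algebraMap R _ (Q v) := CliffordAlgebra.ι_sq_scalar Q v
    have ha := comm_lemma Q v W hW a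
    have hb := comm_lemma Q v W hW b
    -- equation 1 : z = F (involute a) + F (involute b) * ι Q v
    have eq1 : z = F (involute a) + F (involute b) * ι Q v := by
      have key : z * algebraMap R _ (Q v) =
          (F (involute a) + F (involute b) * ι Q v) * algebraMap R _ (Q v) := by
        calc z * algebraMap R _ (Q v) = z * (ι Q v * ι Q v) := by rw [hsq]
          _ = ι Q v * z * ι Q v := by rw [← mul_assoc, hc]
          _ = (F (involute a) * ι Q v + F (involute b) * algebraMap R _ (Q v)) * ι Q v := by
              rw [hz, mul_add, ha, ← mul_assoc, hb, mul_assoc, hsq]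
          _ = (F (involute a) + F (involute b) * ι Q v) * algebraMap R _ (Q v) := by
              simp only [add_mul, mul_assoc, hsq, Algebra.commutes]
      exact halg.mul_right_cancel key
    -- equation 2 : z = F (involute a) - F (involute b) * ι Q v
    have eq2 : z = F (involute a) - F (involute b) * ι Q v := by
      conv_lhs => rw [← involute_eq_of_mem_even hze', hz]
      rw [map_add, map_mul, involute_ι, map_involute', map_involute', mul_neg, ← sub_eq_add_neg]
    -- hence `F (involute b) * ι Q v = 0` since 2 is invertible
    have h2' : IsUnit (2 : CliffordAlgebra Q) := by
      have := h2.map (algebraMap R (CliffordAlgebra Q))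
      rwa [map_ofNat] at this
    have hb0 : F (involute b) * ι Q v = 0 := by
      have hXX : F (involute b) * ι Q v + F (involute b) * ι Q v = 0 := by
        have h := eq1.symm.trans eq2
        have h' : F (involute b) * ι Q v = -(F (involute b) * ι Q v) := by
          apply add_left_cancel (a := F (involute a))
          rw [h, sub_eq_add_neg]
        exact neg_eq_iff_add_eq_zero.mp h'.symm
      have h2x : (2 : CliffordAlgebra Q) * (F (involute b) * ι Q v) = 0 := by
        rw [two_mul]; exact hXX
      exact (h2'.mul_right_eq_zero).mp h2x
    have hz' : z = F (involute a) := by rw [eq2, hb0, sub_zero]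
    -- use the grading to replace `involute a` by its even part
    have hmem : involute a ∈ evenOdd (Q.comp W.subtype) 0 ⊔ evenOdd (Q.comp W.subtype) 1 := by
      rw [(evenOdd_isCompl (Q.comp W.subtype)).sup_eq_top]; trivial
    obtain ⟨y₀, hy₀, y₁, hy₁, hsum⟩ := Submodule.mem_sup.mp hmem
    have h0 : F y₀ ∈ evenOdd Q 0 := map_evenOdd_mem Q W 0 hy₀
    have h1 : F y₁ ∈ evenOdd Q 1 := map_evenOdd_mem Q W 1 hy₁
    have hy₁0 : F y₁ = 0 := by
      have hmem0 : F y₁ ∈ evenOdd Q 0 := by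
        have : F y₁ = z - F y₀ := by rw [hz', ← hsum, map_add]; abel
        rw [this]
        exact Submodule.sub_mem _ hze' h0
      have := (evenOdd_isCompl (Q := Q)).disjoint.le_bot (Submodule.mem_inf.mpr ⟨hmem0, h1⟩)
      simpa using this
    refine Subalgebra.mem_map.mpr ⟨y₀, hy₀, ?_⟩
    rw [hz', ← hsum, map_add, hy₁0, add_zero]
end

section
/- Let ℓ be a prime and let Λ be a finite free ℤ_ℓ-module with a nondegenerate symmetric bilinear form. Define GSpin(Λ) = {z ∈ C⁺(Λ)^× : z Λ z⁻¹ = Λ}, where Λ is viewed inside the Clifford algebra C(Λ) and conjugation is taken in C(Λ ⊗ ℚ_ℓ). Then GSpin(Λ) = GSpin(Λ ⊗ ℚ_ℓ) ∩ C⁺(Λ)^×, where GSpin(Λ ⊗ ℚ_ℓ) = {z ∈ C⁺(Λ ⊗ ℚ_ℓ)^× : z (Λ ⊗ ℚ_ℓ) z⁻¹ = Λ ⊗ ℚ_ℓ}. -/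
open CliffordAlgebra Submodule

/-- The even Clifford algebra of a `ℤ_ℓ`-lattice `L`, realized inside the Clifford
algebra of the ambient `ℚ_ℓ`-quadratic space: the subring generated by the scalars
coming from `ℤ_ℓ` together with all products `ι x * ι y` with `x, y ∈ L`. -/
noncomputable def evenCliffordOfLattice (ℓ : ℕ) [Fact (Nat.Prime ℓ)]
    {V : Type*} [AddCommGroup V] [Module ℚ_[ℓ] V] [Module ℤ_[ℓ] V]
    [IsScalarTower ℤ_[ℓ] ℚ_[ℓ] V]
    (Q : QuadraticForm ℚ_[ℓ] V) (L : Submodule ℤ_[ℓ] V) :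
    Subring (CliffordAlgebra Q) :=
  Subring.closure
    (Set.range (fun r : ℤ_[ℓ] => algebraMap ℚ_[ℓ] (CliffordAlgebra Q) (r : ℚ_[ℓ])) ∪
      {c | ∃ x ∈ L, ∃ y ∈ L, c = ι Q x * ι Q y})

/-! `z Λ z⁻¹ = Λ` gives `z V z⁻¹ = V` by taking `ℚ_ℓ`-spans. Conversely, if `z, z⁻¹ ∈ C⁺(Λ)` and
`z V z⁻¹ = V`, then `z ι(Λ) z⁻¹` lies in `C(Λ) ∩ ι(V)`, where `C(Λ)` is the `ℤ_ℓ`-algebra generated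
by `ι(Λ)`, so it suffices that `ι x ∈ C(Λ)` forces `x ∈ Λ`. Choose a bilinear form `B`, integral on
`Λ`, with `B(x, x) = -Q(x)`. Then `changeForm B : C(V) → ⋀V` sends `ι x` to `x` and `C(Λ)` into the
`ℤ_ℓ`-algebra generated by `Λ`, which is stable under contraction with any `d` of the dual lattice
and whose scalars are integral. Contracting `x` with `d` gives `d(x) ∈ ℤ_ℓ` for all such `d`, that
is, `x ∈ Λ`. -/

theorem Algebra.toSubmodule_adjoin_le_of_mul_mem {S A : Type*} [CommSemiring S] [Semiring A]
    [Algebra S A] {s : Set A} {P : Submodule S A} (one : 1 ∈ P)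
    (mul : ∀ x ∈ s, ∀ y ∈ Algebra.adjoin S s, y ∈ P → x * y ∈ P) :
    Subalgebra.toSubmodule (Algebra.adjoin S s) ≤ P := by
  rw [Algebra.adjoin_eq_span, span_le]
  intro y hy
  induction hy using Submonoid.closure_induction_left with
  | one => exact one
  | mul_left x hx y hy ih =>
    exact mul x hx y (Submonoid.closure_le.mpr Algebra.subset_adjoin hy) ih

section Lattice

variable {S R M : Type*} [CommRing S] [CommRing R] [Algebra S R] [AddCommGroup M] [Module R M]
  [Module S M] [IsScalarTower S R M] {L : Submodule S M} {I : Type*} {b : Module.Basis I R M}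

namespace Submodule

theorem exists_basis_span_eq [IsFractionRing S R] [Module.Free S L]
    (hL : span R (L : Set M) = ⊤) :
    ∃ b : Module.Basis (Module.Free.ChooseBasisIndex S L) R M, span S (Set.range b) = L := by
  let b := Module.Free.chooseBasis S L
  have hspan : span S (Set.range (L.subtype ∘ b)) = L := by
    rw [Set.range_comp, ← map_span, b.span_eq, map_top, range_subtype]
  have hli : LinearIndependent R (L.subtype ∘ b) :=
    (b.linearIndependent.map' L.subtype L.ker_subtype).localization R (nonZeroDivisors S)
  refine ⟨.mk hli ?_, by rwa [Module.Basis.coe_mk]⟩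
  rw [← hL, span_le]
  exact fun x hx => span_le_restrictScalars S R _ (hspan.symm ▸ hx)

theorem apply_mem_one_of_span_eq (hb : span S (Set.range b) = L) {d : M →ₗ[R] R}
    (hd : ∀ i, d (b i) ∈ (1 : Submodule S R)) {m : M} (hm : m ∈ L) :
    d m ∈ (1 : Submodule S R) := by
  rw [← hb] at hm
  exact span_le (p := (1 : Submodule S R).comap (d.restrictScalars S)).mpr
    (Set.range_subset_iff.mpr hd) hm

theorem bilin_mem_one_of_span_eq (hb : span S (Set.range b) = L) {B : LinearMap.BilinForm R M}
    (hB : ∀ i j, B (b i) (b j) ∈ (1 : Submodule S R)) {m n : M} (hm : m ∈ L) (hn : n ∈ L) :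
    B m n ∈ (1 : Submodule S R) :=
  apply_mem_one_of_span_eq hb
    (fun j => apply_mem_one_of_span_eq (d := B.flip (b j)) hb (fun i => hB i j) hm) hn

theorem mem_of_forall_dual_mem_one (hb : span S (Set.range b) = L) {x : M}
    (hx : ∀ d : Module.Dual R M, (∀ m ∈ L, d m ∈ (1 : Submodule S R)) →
      d x ∈ (1 : Submodule S R)) : x ∈ L := by
  classical
  have hcoord : ∀ i, b.coord i x ∈ (1 : Submodule S R) := fun i =>
    hx _ fun m hm => apply_mem_one_of_span_eq hb (fun j => by
      rw [b.coord_apply, b.repr_self, Finsupp.single_apply]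
      split_ifs
      exacts [mem_one.mpr ⟨1, map_one _⟩, zero_mem _]) hm
  rw [← b.linearCombination_repr x, Finsupp.linearCombination_apply, ← hb]
  refine sum_mem fun i _ => ?_
  obtain ⟨s, hs⟩ := mem_one.mp (hcoord i)
  simp only [← b.coord_apply, ← hs, algebraMap_smul]
  exact smul_mem _ s (subset_span ⟨i, rfl⟩)

end Submodule

theorem QuadraticMap.toBilin_mem_one_of_span_eq [LinearOrder I] (hb : span S (Set.range b) = L)
    {Q : QuadraticForm R M} (hQ : ∀ x ∈ L, Q x ∈ (1 : Submodule S R)) {m n : M} (hm : m ∈ L) (hn : n ∈ L) :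
    Q.toBilin b m n ∈ (1 : Submodule S R) := by
  have hbL : ∀ i, b i ∈ L := fun i => hb ▸ subset_span ⟨i, rfl⟩
  refine bilin_mem_one_of_span_eq hb (fun i j => ?_) hm hn
  rw [toBilin_apply]
  split_ifs
  · exact hQ _ (hbL i)
  · exact sub_mem (sub_mem (hQ _ (add_mem (hbL i) (hbL j))) (hQ _ (hbL i))) (hQ _ (hbL j))
  · exact zero_mem _

theorem ExteriorAlgebra.algebraMapInv_mem_one_of_mem_adjoin_ι {y : ExteriorAlgebra R M}
    (hy : y ∈ Algebra.adjoin S (ι R '' L)) : algebraMapInv y ∈ (1 : Submodule S R) := by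
  have hle : Algebra.adjoin S (ι R '' L) ≤ (⊥ : Subalgebra S R).comap
      ((algebraMapInv : ExteriorAlgebra R M →ₐ[R] R).restrictScalars S) :=
    Algebra.adjoin_le (by rintro _ ⟨m, -, rfl⟩; simpa [algebraMapInv] using ⟨0, map_zero _⟩)
  rw [← Algebra.toSubmodule_bot]
  exact hle hy

namespace CliffordAlgebra

variable {Q Q' : QuadraticForm R M}

theorem contractLeft_mem_adjoin_ι {d : Module.Dual R M} (hd : ∀ m ∈ L, d m ∈ (1 : Submodule S R))
    {y : CliffordAlgebra Q} (hy : y ∈ Algebra.adjoin S (ι Q '' L)) :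
    contractLeft d y ∈ Algebra.adjoin S (ι Q '' L) := by
  refine Algebra.toSubmodule_adjoin_le_of_mul_mem (P := (Subalgebra.toSubmodule
    (Algebra.adjoin S (ι Q '' L))).comap ((contractLeft d).restrictScalars S)) ?_ ?_ hy
  · simp
  · rintro _ ⟨m, hm, rfl⟩ y hy ih
    obtain ⟨s, hs⟩ := mem_one.mp (hd m hm)
    simp only [mem_comap, LinearMap.coe_restrictScalars, Subalgebra.mem_toSubmodule] at ih ⊢
    rw [contractLeft_ι_mul, ← hs, algebraMap_smul]
    exact sub_mem (Subalgebra.smul_mem _ hy s)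
      (mul_mem (Algebra.subset_adjoin ⟨m, hm, rfl⟩) ih)

theorem changeForm_mem_adjoin_ι {B : LinearMap.BilinForm R M} (h : B.toQuadraticMap = Q' - Q)
    (hB : ∀ m ∈ L, ∀ n ∈ L, B m n ∈ (1 : Submodule S R))
    {y : CliffordAlgebra Q} (hy : y ∈ Algebra.adjoin S (ι Q '' L)) :
    changeForm h y ∈ Algebra.adjoin S (ι Q' '' L) := by
  refine Algebra.toSubmodule_adjoin_le_of_mul_mem (P := (Subalgebra.toSubmodule
    (Algebra.adjoin S (ι Q' '' L))).comap ((changeForm h).restrictScalars S)) ?_ ?_ hy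
  · simp
  · rintro _ ⟨m, hm, rfl⟩ y hy ih
    simp only [mem_comap, LinearMap.coe_restrictScalars, Subalgebra.mem_toSubmodule] at ih ⊢
    rw [changeForm_ι_mul]
    exact sub_mem (mul_mem (Algebra.subset_adjoin ⟨m, hm, rfl⟩) ih)
      (contractLeft_mem_adjoin_ι (hB m hm) ih)

theorem apply_mem_one_of_ι_mem_adjoin_ι {B : LinearMap.BilinForm R M}
    (h : B.toQuadraticMap = 0 - Q) (hB : ∀ m ∈ L, ∀ n ∈ L, B m n ∈ (1 : Submodule S R))
    {x : M} (hx : ι Q x ∈ Algebra.adjoin S (ι Q '' L)) {d : Module.Dual R M}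
    (hd : ∀ m ∈ L, d m ∈ (1 : Submodule S R)) : d x ∈ (1 : Submodule S R) := by
  have hext := changeForm_mem_adjoin_ι h hB hx
  rw [changeForm_ι] at hext
  have hscalar := contractLeft_mem_adjoin_ι hd hext
  rw [contractLeft_ι] at hscalar
  convert ExteriorAlgebra.algebraMapInv_mem_one_of_mem_adjoin_ι hscalar
  exact (ExteriorAlgebra.algebraMap_leftInverse M (d x)).symm

theorem mem_of_ι_mem_adjoin_ι [IsFractionRing S R] [Module.Free S L]
    (hL : span R (L : Set M) = ⊤) (hQ : ∀ x ∈ L, Q x ∈ (1 : Submodule S R)) {x : M}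
    (hx : ι Q x ∈ Algebra.adjoin S (ι Q '' L)) : x ∈ L := by
  obtain ⟨b, hb⟩ := exists_basis_span_eq hL
  let := IsWellOrder.linearOrder (WellOrderingRel (α := Module.Free.ChooseBasisIndex S L))
  -- `toBilin` is triangular, hence integral on `L` even when `2` is not a unit of `S`.
  refine mem_of_forall_dual_mem_one hb fun d hd =>
    apply_mem_one_of_ι_mem_adjoin_ι (B := (-Q).toBilin b) ?_ ?_ hx hd
  · rw [QuadraticMap.toQuadraticMap_toBilin, zero_sub]
  · intro m hm n hn
    exact QuadraticMap.toBilin_mem_one_of_span_eq hb (fun y hy => neg_mem (hQ y hy)) hm hn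

end CliffordAlgebra

end Lattice

namespace CliffordAlgebra

variable {R M : Type*} [CommRing R] [AddCommGroup M] [Module R M] {Q : QuadraticForm R M}
  {L : Set M}

theorem conj_range_ι_eq_of_conj_image_ι_eq (hL : span R L = ⊤)
    {a b : CliffordAlgebra Q} (h : {c | ∃ x ∈ L, c = a * ι Q x * b} = ι Q '' L) :
    {c | ∃ x : M, c = a * ι Q x * b} = Set.range (ι Q) := by
  let conj := (LinearMap.mulLeftRight R (a, b)).comp (ι Q)
  have himage : conj '' L = ι Q '' L := by
    rw [← h]
    ext c
    simp [conj, eq_comm]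
  have hrange : LinearMap.range conj = LinearMap.range (ι Q) := by
    rw [← Submodule.map_top conj, ← hL, map_span, himage, ← map_span, hL, Submodule.map_top]
  ext c
  have hc := congr(c ∈ $hrange)
  simp only [LinearMap.mem_range, LinearMap.comp_apply, LinearMap.mulLeftRight_apply, conj] at hc
  simp only [Set.mem_ofPred_eq, Set.mem_range, @eq_comm _ c]
  exact Iff.of_eq hc

theorem conj_image_ι_eq_of_conj_range_ι_eq {A : Subring (CliffordAlgebra Q)}
    (hA : ∀ x, ι Q x ∈ A → x ∈ L) (hLA : ι Q '' L ⊆ A) {z : (CliffordAlgebra Q)ˣ}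
    (hz : ↑z ∈ A) (hz' : ↑z⁻¹ ∈ A)
    (h : {c | ∃ x : M, c = ↑z * ι Q x * ↑z⁻¹} = Set.range (ι Q)) :
    {c | ∃ x ∈ L, c = ↑z * ι Q x * ↑z⁻¹} = ι Q '' L := by
  ext c
  constructor
  · rintro ⟨x, hx, rfl⟩
    obtain ⟨u, hu⟩ : ↑z * ι Q x * ↑z⁻¹ ∈ Set.range (ι Q) := h ▸ ⟨x, rfl⟩
    exact ⟨u, hA u (hu ▸ mul_mem (mul_mem hz (hLA ⟨x, hx, rfl⟩)) hz'), hu⟩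
  · rintro ⟨u, hu, rfl⟩
    obtain ⟨x, hx⟩ : ι Q u ∈ {c | ∃ x : M, c = ↑z * ι Q x * ↑z⁻¹} := h ▸ ⟨u, rfl⟩
    have hxu : ι Q x = ↑z⁻¹ * ι Q u * ↑z := by simp [hx, mul_assoc]
    exact ⟨x, hA x (hxu ▸ mul_mem (mul_mem hz' (hLA ⟨u, hu, rfl⟩)) hz), hx⟩

end CliffordAlgebra

section evenCliffordOfLattice

variable {ℓ : ℕ} [Fact (Nat.Prime ℓ)] {V : Type*} [AddCommGroup V] [Module ℚ_[ℓ] V]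
  [Module ℤ_[ℓ] V] [IsScalarTower ℤ_[ℓ] ℚ_[ℓ] V] {Q : QuadraticForm ℚ_[ℓ] V}
  {L : Submodule ℤ_[ℓ] V}

theorem evenCliffordOfLattice_le_even : evenCliffordOfLattice ℓ Q L ≤ (even Q).toSubring := by
  refine Subring.closure_le.mpr (Set.union_subset ?_ ?_)
  · rintro _ ⟨r, rfl⟩
    exact (even Q).algebraMap_mem _
  · rintro _ ⟨x, -, y, -, rfl⟩
    rw [SetLike.mem_coe, Subalgebra.mem_toSubring, ← Subalgebra.mem_toSubmodule, even_toSubmodule]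
    exact ι_mul_ι_mem_evenOdd_zero Q x y

theorem evenCliffordOfLattice_le_adjoin :
    evenCliffordOfLattice ℓ Q L ≤ (Algebra.adjoin ℤ_[ℓ] (ι Q '' L)).toSubring := by
  refine Subring.closure_le.mpr (Set.union_subset ?_ ?_)
  · rintro _ ⟨r, rfl⟩
    exact (Algebra.adjoin ℤ_[ℓ] (ι Q '' L)).algebraMap_mem r
  · rintro _ ⟨x, hx, y, hy, rfl⟩
    exact mul_mem (Algebra.subset_adjoin ⟨x, hx, rfl⟩) (Algebra.subset_adjoin ⟨y, hy, rfl⟩)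

end evenCliffordOfLattice

theorem gspin_lattice_eq_gspin_rational_inter_units_general
    (ℓ : ℕ) [Fact (Nat.Prime ℓ)]
    (V : Type*) [AddCommGroup V] [Module ℚ_[ℓ] V]
    [Module ℤ_[ℓ] V] [IsScalarTower ℤ_[ℓ] ℚ_[ℓ] V]
    (Q : QuadraticForm ℚ_[ℓ] V)
    (L : Submodule ℤ_[ℓ] V) (hfree : Module.Free ℤ_[ℓ] ↥L)
    (hfull : span ℚ_[ℓ] (L : Set V) = ⊤)
    (hQL : ∀ x ∈ L, ∃ r : ℤ_[ℓ], Q x = (r : ℚ_[ℓ]))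
    (z : (CliffordAlgebra Q)ˣ) :
    ((↑z ∈ evenCliffordOfLattice ℓ Q L ∧ ↑z⁻¹ ∈ evenCliffordOfLattice ℓ Q L) ∧
        {c | ∃ x ∈ L, c = ↑z * ι Q x * ↑z⁻¹} = ι Q '' (L : Set V)) ↔
      (((↑z : CliffordAlgebra Q) ∈ even Q ∧ (↑z⁻¹ : CliffordAlgebra Q) ∈ even Q) ∧
        {c | ∃ x : V, c = ↑z * ι Q x * ↑z⁻¹} = Set.range (ι Q) ∧
        (↑z ∈ evenCliffordOfLattice ℓ Q L ∧ ↑z⁻¹ ∈ evenCliffordOfLattice ℓ Q L)) := by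
  have hQ : ∀ x ∈ L, Q x ∈ (1 : Submodule ℤ_[ℓ] ℚ_[ℓ]) := fun x hx => by
    obtain ⟨r, hr⟩ := hQL x hx
    exact mem_one.mpr ⟨r, hr.symm⟩
  constructor
  · rintro ⟨⟨hz, hz'⟩, hconj⟩
    exact ⟨⟨evenCliffordOfLattice_le_even hz, evenCliffordOfLattice_le_even hz'⟩,
      conj_range_ι_eq_of_conj_image_ι_eq hfull hconj, hz, hz'⟩
  · rintro ⟨-, hconj, hz, hz'⟩
    exact ⟨⟨hz, hz'⟩, conj_image_ι_eq_of_conj_range_ι_eq (A := (Algebra.adjoin ℤ_[ℓ] _).toSubring)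
      (fun x => mem_of_ι_mem_adjoin_ι hfull hQ) Algebra.subset_adjoin
      (evenCliffordOfLattice_le_adjoin hz) (evenCliffordOfLattice_le_adjoin hz') hconj⟩

/-- `GSpin(Λ) = GSpin(Λ ⊗ ℚ_ℓ) ∩ C⁺(Λ)ˣ`: for a unit `z` of the Clifford algebra,
`z` lies in `C⁺(Λ)` together with its inverse and conjugation by `z` preserves `Λ`
if and only if `z` and its inverse lie in the even part, conjugation by `z` preserves
`Λ ⊗ ℚ_ℓ`, and `z` and its inverse lie in `C⁺(Λ)`. -/
theorem gspin_lattice_eq_gspin_rational_inter_units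
    (ℓ : ℕ) [Fact (Nat.Prime ℓ)]
    (V : Type*) [AddCommGroup V] [Module ℚ_[ℓ] V] [FiniteDimensional ℚ_[ℓ] V]
    [Module ℤ_[ℓ] V] [IsScalarTower ℤ_[ℓ] ℚ_[ℓ] V]
    (Q : QuadraticForm ℚ_[ℓ] V)
    (hnd : ∀ x : V, (∀ y : V, QuadraticMap.polar Q x y = 0) → x = 0)
    (L : Submodule ℤ_[ℓ] V) (hfree : Module.Free ℤ_[ℓ] ↥L) (hfin : Module.Finite ℤ_[ℓ] ↥L)
    (hfull : span ℚ_[ℓ] (L : Set V) = ⊤)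
    (hQL : ∀ x ∈ L, ∃ r : ℤ_[ℓ], Q x = (r : ℚ_[ℓ]))
    (z : (CliffordAlgebra Q)ˣ) :
    ((↑z ∈ evenCliffordOfLattice ℓ Q L ∧ ↑z⁻¹ ∈ evenCliffordOfLattice ℓ Q L) ∧
        {c | ∃ x ∈ L, c = ↑z * ι Q x * ↑z⁻¹} = ι Q '' (L : Set V)) ↔
      (((↑z : CliffordAlgebra Q) ∈ even Q ∧ (↑z⁻¹ : CliffordAlgebra Q) ∈ even Q) ∧
        {c | ∃ x : V, c = ↑z * ι Q x * ↑z⁻¹} = Set.range (ι Q) ∧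
        (↑z ∈ evenCliffordOfLattice ℓ Q L ∧ ↑z⁻¹ ∈ evenCliffordOfLattice ℓ Q L)) :=
  gspin_lattice_eq_gspin_rational_inter_units_general ℓ V Q L hfree hfull hQL z
end
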